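/- arXiv:2510.12757 — 3 statements merged into one kernel-verified Lean document; each statement's English description precedes it below -/
import Mathlib

section
/- Let (u,v,w) and (u',v',w') be triples of nonzero isotropic, pairwise orthogonal vectors in Im(O') with Ω(u,v,w) = √2 = Ω(u',v',w'). Then there exists a unique ℝ-linear automorphism ψ of O' satisfying ψ(xy)=ψ(x)ψ(y) for all x,y ∈ O' (an ℝ-algebra automorphism) such that ψ(u)=u', ψ(v)=v' and ψ(w)=w'. -/
noncomputable section

open Quaternion

/-- The split octonions `𝕆' = ℍ × ℍ`. -/
abbrev SplitOct : Type := ℍ[ℝ] × ℍ[ℝ]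

namespace SplitOct

/-- Split octonion multiplication `(a,b)(c,d) = (ac + d̄b, da + bc̄)`. -/
def mul (x y : SplitOct) : SplitOct :=
  (x.1 * y.1 + star y.2 * x.2, y.2 * x.1 + x.2 * star y.1)

/-- Split octonion conjugation `(a,b)* = (ā, −b)`. -/
def conj (x : SplitOct) : SplitOct := (star x.1, -x.2)

lemma conj_add (x y : SplitOct) : conj (x + y) = conj x + conj y := by
  simp only [conj, Prod.fst_add, Prod.snd_add, star_add, Prod.mk_add_mk, neg_add]

lemma conj_neg (x : SplitOct) : conj (-x) = -conj x := by
  simp [conj, Prod.ext_iff]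

lemma conj_sub (x y : SplitOct) : conj (x - y) = conj x - conj y := by
  rw [sub_eq_add_neg, conj_add, conj_neg, ← sub_eq_add_neg]

lemma conj_smul (r : ℝ) (x : SplitOct) : conj (r • x) = r • conj x := by
  simp [conj, Prod.ext_iff]

lemma conj_conj (x : SplitOct) : conj (conj x) = x := by
  simp [conj]

lemma conj_zero : conj 0 = 0 := by
  simp [conj, Prod.ext_iff]

/-- The imaginary split octonions `Im 𝕆' = {x | x* = −x}`. -/
def Im : Submodule ℝ SplitOct where
  carrier := {x | conj x = -x}
  add_mem' := by
    intro a b ha hb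
    simp only [Set.mem_setOf_eq] at ha hb ⊢
    rw [conj_add, ha, hb, neg_add]
  zero_mem' := by
    simp only [Set.mem_setOf_eq, conj_zero, neg_zero]
  smul_mem' := by
    intro r a ha
    simp only [Set.mem_setOf_eq] at ha ⊢
    rw [conj_smul, ha, smul_neg]

lemma mem_Im_iff {x : SplitOct} : x ∈ Im ↔ conj x = -x := Iff.rfl

/-- `q x = x·x*`, read as a real number (its values lie in `ℝ·1 ≅ ℝ`). -/
def q (x : SplitOct) : ℝ := (mul x (conj x)).1.re

/-- The polarization `⟨x,y⟩` of the quadratic form `q`. -/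
def polar (x y : SplitOct) : ℝ := (q (x + y) - q x - q y) / 2

/-- The cross product `x × y = (xy − (xy)*)/2`. -/
def cross (x y : SplitOct) : SplitOct := (2 : ℝ)⁻¹ • (mul x y - conj (mul x y))

/-- The scalar triple product `Ω(u,v,w) = ⟨u×v, w⟩`. -/
def triple (u v w : SplitOct) : ℝ := polar (cross u v) w

lemma q_apply (x : SplitOct) : q x = normSq x.1 - normSq x.2 := by
  simp only [q, mul, conj, star_neg, neg_mul, Quaternion.self_mul_star, Quaternion.star_mul_self,
    Quaternion.re_add, Quaternion.re_neg, Quaternion.re_coe]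
  ring

lemma polar_apply (x y : SplitOct) :
    polar x y = (x.1 * star y.1).re - (x.2 * star y.2).re := by
  simp only [polar, q_apply, Prod.fst_add, Prod.snd_add, Quaternion.normSq_def',
    Quaternion.re_mul, Quaternion.re_add, Quaternion.imI_add, Quaternion.imJ_add,
    Quaternion.imK_add, Quaternion.re_star, Quaternion.imI_star, Quaternion.imJ_star,
    Quaternion.imK_star]
  ring

lemma polar_add_left (x x' y : SplitOct) : polar (x + x') y = polar x y + polar x' y := by
  simp only [polar_apply, Prod.fst_add, Prod.snd_add, add_mul, Quaternion.re_add]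
  ring

lemma polar_add_right (x y y' : SplitOct) : polar x (y + y') = polar x y + polar x y' := by
  simp only [polar_apply, Prod.fst_add, Prod.snd_add, star_add, mul_add, Quaternion.re_add]
  ring

lemma polar_smul_left (r : ℝ) (x y : SplitOct) : polar (r • x) y = r * polar x y := by
  simp only [polar_apply, Prod.smul_fst, Prod.smul_snd, smul_mul_assoc, Quaternion.re_smul,
    smul_eq_mul]
  ring

lemma polar_smul_right (r : ℝ) (x y : SplitOct) : polar x (r • y) = r * polar x y := by
  simp only [polar_apply, Prod.smul_fst, Prod.smul_snd, Quaternion.star_smul,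
    mul_smul_comm, Quaternion.re_smul, smul_eq_mul]
  ring

lemma polar_zero_left (y : SplitOct) : polar 0 y = 0 := by
  simp [polar_apply]

lemma polar_zero_right (x : SplitOct) : polar x 0 = 0 := by
  simp [polar_apply]

lemma mul_add_left (x x' y : SplitOct) : mul (x + x') y = mul x y + mul x' y := by
  simp only [mul, Prod.fst_add, Prod.snd_add, add_mul, mul_add, Prod.mk_add_mk, Prod.mk.injEq]
  constructor <;> abel

lemma mul_add_right (x y y' : SplitOct) : mul x (y + y') = mul x y + mul x y' := by
  simp only [mul, Prod.fst_add, Prod.snd_add, star_add, add_mul, mul_add, Prod.mk_add_mk,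
    Prod.mk.injEq]
  constructor <;> abel

lemma mul_smul_left (r : ℝ) (x y : SplitOct) : mul (r • x) y = r • mul x y := by
  simp only [mul, Prod.smul_fst, Prod.smul_snd, smul_mul_assoc, mul_smul_comm, Prod.smul_mk,
    smul_add]

lemma mul_smul_right (r : ℝ) (x y : SplitOct) : mul x (r • y) = r • mul x y := by
  simp only [mul, Prod.smul_fst, Prod.smul_snd, Quaternion.star_smul, smul_mul_assoc,
    mul_smul_comm, Prod.smul_mk, smul_add]

lemma mul_zero_left (y : SplitOct) : mul 0 y = 0 := by
  simp [mul, Prod.ext_iff]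

lemma mul_zero_right (x : SplitOct) : mul x 0 = 0 := by
  simp [mul, Prod.ext_iff]

lemma cross_add_left (x x' y : SplitOct) : cross (x + x') y = cross x y + cross x' y := by
  rw [cross, cross, cross, mul_add_left, conj_add]
  module

lemma cross_add_right (x y y' : SplitOct) : cross x (y + y') = cross x y + cross x y' := by
  rw [cross, cross, cross, mul_add_right, conj_add]
  module

lemma cross_smul_left (r : ℝ) (x y : SplitOct) : cross (r • x) y = r • cross x y := by
  rw [cross, cross, mul_smul_left, conj_smul]
  module

lemma cross_smul_right (r : ℝ) (x y : SplitOct) : cross x (r • y) = r • cross x y := by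
  rw [cross, cross, mul_smul_right, conj_smul]
  module

lemma cross_zero_left (y : SplitOct) : cross 0 y = 0 := by
  simp [cross, mul_zero_left, conj_zero]

lemma cross_zero_right (x : SplitOct) : cross x 0 = 0 := by
  simp [cross, mul_zero_right, conj_zero]

lemma cross_mem_Im (x y : SplitOct) : cross x y ∈ Im := by
  rw [mem_Im_iff, cross, conj_smul, conj_sub, conj_conj]
  module

lemma triple_add₁ (u u' v w : SplitOct) :
    triple (u + u') v w = triple u v w + triple u' v w := by
  rw [triple, triple, triple, cross_add_left, polar_add_left]

lemma triple_add₂ (u v v' w : SplitOct) :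
    triple u (v + v') w = triple u v w + triple u v' w := by
  rw [triple, triple, triple, cross_add_right, polar_add_left]

lemma triple_add₃ (u v w w' : SplitOct) :
    triple u v (w + w') = triple u v w + triple u v w' :=
  polar_add_right _ _ _

lemma triple_smul₁ (r : ℝ) (u v w : SplitOct) : triple (r • u) v w = r * triple u v w := by
  rw [triple, triple, cross_smul_left, polar_smul_left]

lemma triple_smul₂ (r : ℝ) (u v w : SplitOct) : triple u (r • v) w = r * triple u v w := by
  rw [triple, triple, cross_smul_right, polar_smul_left]

lemma triple_smul₃ (r : ℝ) (u v w : SplitOct) : triple u v (r • w) = r * triple u v w :=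
  polar_smul_right _ _ _

lemma triple_zero₁ (v w : SplitOct) : triple 0 v w = 0 := by
  rw [triple, cross_zero_left, polar_zero_left]

lemma triple_zero₂ (u w : SplitOct) : triple u 0 w = 0 := by
  rw [triple, cross_zero_right, polar_zero_left]

lemma triple_zero₃ (u v : SplitOct) : triple u v 0 = 0 :=
  polar_zero_right _

/-- The orthogonal complement of `P` inside the imaginary split octonions. -/
def orth (P : Submodule ℝ SplitOct) : Submodule ℝ SplitOct where
  carrier := {x | x ∈ Im ∧ ∀ y ∈ P, polar x y = 0}
  add_mem' := by
    rintro a b ⟨ha1, ha2⟩ ⟨hb1, hb2⟩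
    exact ⟨Im.add_mem ha1 hb1, fun y hy => by
      rw [polar_add_left, ha2 y hy, hb2 y hy, add_zero]⟩
  zero_mem' := ⟨Im.zero_mem, fun y _ => polar_zero_left y⟩
  smul_mem' := by
    rintro r a ⟨ha1, ha2⟩
    exact ⟨Im.smul_mem r ha1, fun y hy => by
      rw [polar_smul_left, ha2 y hy, mul_zero]⟩

/-- The annihilator `Ann x = {v ∈ Im 𝕆' | x × v = 0}`. -/
def Ann (x : SplitOct) : Submodule ℝ SplitOct where
  carrier := {v | v ∈ Im ∧ cross x v = 0}
  add_mem' := by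
    rintro a b ⟨ha1, ha2⟩ ⟨hb1, hb2⟩
    exact ⟨Im.add_mem ha1 hb1, by rw [cross_add_right, ha2, hb2, add_zero]⟩
  zero_mem' := ⟨Im.zero_mem, cross_zero_right x⟩
  smul_mem' := by
    rintro r a ⟨ha1, ha2⟩
    exact ⟨Im.smul_mem r ha1, by rw [cross_smul_right, ha2, smul_zero]⟩

/-- An isotropic line of `Im 𝕆'`. -/
def IsIsotropicLine (ℓ : Submodule ℝ SplitOct) : Prop :=
  ∃ x, x ∈ Im ∧ x ≠ 0 ∧ q x = 0 ∧ ℓ = Submodule.span ℝ {x}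

/-- An annihilator photon: a 2-dimensional totally isotropic subspace of `Im 𝕆'`
on which the cross product vanishes identically. -/
def IsAnnihilatorPhoton (ω : Submodule ℝ SplitOct) : Prop :=
  ω ≤ Im ∧ Module.finrank ℝ ω = 2 ∧ (∀ x ∈ ω, q x = 0) ∧
    ∀ x ∈ ω, ∀ y ∈ ω, cross x y = 0


/-!
The split octonions form an alternative algebra in which imaginary elements satisfy
`x y + y x = -2⟨x, y⟩`. For a null triple `(u, v, w)` these two rules express every product
of two elements of the frame `1, u, v, w, uv, vw, wu, u(vw)` as a combination of the frame, with
coefficients that do not depend on the triple. The frame is a basis, because the trace form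
`re (x y)` has an invertible Gram matrix on it. Hence the linear map taking the frame of one null
triple to that of the other is an automorphism; it is the only one, since an automorphism fixes `1`
and so is determined on the frame by the images of `u`, `v`, `w`.
-/

/-- The unit of `mul`; not `(1 : ℍ[ℝ] × ℍ[ℝ]) = (1, 1)`. -/
def one : SplitOct := (1, 0)

def mulₗ : SplitOct →ₗ[ℝ] SplitOct →ₗ[ℝ] SplitOct :=
  LinearMap.mk₂ ℝ mul mul_add_left mul_smul_left mul_add_right mul_smul_right

/-- The coefficient of `one`. -/
def re : SplitOct →ₗ[ℝ] ℝ := QuaternionAlgebra.reₗ (-1) 0 (-1) ∘ₗ LinearMap.fst ℝ ℍ[ℝ] ℍ[ℝ]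

lemma re_apply (x : SplitOct) : re x = x.1.re := rfl

lemma re_one : re one = 1 := rfl

lemma mul_one_left (x : SplitOct) : mul one x = x := by
  simp [mul, one]

lemma mul_one_right (x : SplitOct) : mul x one = x := by
  simp [mul, one]

lemma polar_comm (x y : SplitOct) : polar x y = polar y x := by
  simp only [polar, add_comm x y]
  ring

lemma conj_mul (x y : SplitOct) : conj (mul x y) = mul (conj y) (conj x) := by
  ext <;> simp [mul, conj]

lemma mul_conj_self (x : SplitOct) : mul x (conj x) = q x • one := by
  ext <;> simp [mul, conj, q_apply, one, Quaternion.normSq_def'] <;> ring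

lemma mul_conj_add_mul_conj (x y : SplitOct) :
    mul x (conj y) + mul y (conj x) = (2 * polar x y) • one := by
  ext <;> simp [mul, conj, polar_apply, one] <;> ring

lemma re_mul_conj (x y : SplitOct) : re (mul x (conj y)) = polar x y := by
  simp only [re_apply, mul, conj, polar_apply, star_neg, neg_mul, Quaternion.re_add,
    Quaternion.re_neg, Quaternion.re_mul, Quaternion.re_star, Quaternion.imI_star,
    Quaternion.imJ_star, Quaternion.imK_star]
  ring

lemma polar_mul_left (x y z : SplitOct) : polar (mul x y) z = polar y (mul (conj x) z) := by
  simp only [mul, conj, polar_apply, Quaternion.re_add, Quaternion.re_mul, Quaternion.imI_mul,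
    Quaternion.imJ_mul, Quaternion.imK_mul, Quaternion.re_neg, Quaternion.imI_neg,
    Quaternion.imJ_neg, Quaternion.imK_neg, Quaternion.re_star, Quaternion.imI_star,
    Quaternion.imJ_star, Quaternion.imK_star, Quaternion.imI_add, Quaternion.imJ_add,
    Quaternion.imK_add, star_add, star_neg, star_mul, star_star]
  ring

lemma mul_mul_add_mul_mul_left (x y z : SplitOct) :
    mul x (mul y z) + mul y (mul x z) = mul (mul x y + mul y x) z := by
  ext <;> simp only [mul, Prod.fst_add, Prod.snd_add, star_add, Quaternion.re_add,
    Quaternion.imI_add, Quaternion.imJ_add, Quaternion.imK_add, Quaternion.re_mul,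
    Quaternion.imI_mul, Quaternion.imJ_mul, Quaternion.imK_mul, Quaternion.re_star,
    Quaternion.imI_star, Quaternion.imJ_star, Quaternion.imK_star] <;> ring

lemma mul_mul_add_mul_mul_right (x y z : SplitOct) :
    mul (mul x y) z + mul (mul x z) y = mul x (mul y z + mul z y) := by
  ext <;> simp only [mul, Prod.fst_add, Prod.snd_add, star_add, Quaternion.re_add,
    Quaternion.imI_add, Quaternion.imJ_add, Quaternion.imK_add, Quaternion.re_mul,
    Quaternion.imI_mul, Quaternion.imJ_mul, Quaternion.imK_mul, Quaternion.re_star,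
    Quaternion.imI_star, Quaternion.imJ_star, Quaternion.imK_star] <;> ring

lemma mul_mul_self_left (x y : SplitOct) : mul x (mul x y) = mul (mul x x) y := by
  have := mul_mul_add_mul_mul_left x x y
  rw [mul_add_left, ← two_smul ℝ, ← two_smul ℝ] at this
  exact smul_right_injective _ two_ne_zero this

lemma mul_mul_self_right (x y : SplitOct) : mul (mul x y) y = mul x (mul y y) := by
  have := mul_mul_add_mul_mul_right x y y
  rw [mul_add_right, ← two_smul ℝ, ← two_smul ℝ] at this
  exact smul_right_injective _ two_ne_zero this

lemma mul_neg_left (x y : SplitOct) : mul (-x) y = -mul x y := by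
  simpa using mul_smul_left (-1) x y

lemma mul_neg_right (x y : SplitOct) : mul x (-y) = -mul x y := by
  simpa using mul_smul_right (-1) x y

lemma map_one_of_map_mul {f : SplitOct → SplitOct} (hf : Function.Surjective f)
    (hmul : ∀ x y, f (mul x y) = mul (f x) (f y)) : f one = one := by
  obtain ⟨x, hx⟩ := hf one
  calc f one = mul (f x) (f one) := by rw [hx, mul_one_left]
    _ = one := by rw [← hmul, mul_one_right, hx]

lemma map_mul_of_basis {ι : Type*} (b : Module.Basis ι ℝ SplitOct) (f : SplitOct →ₗ[ℝ] SplitOct)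
    (hf : ∀ i j, f (mul (b i) (b j)) = mul (f (b i)) (f (b j))) (x y : SplitOct) :
    f (mul x y) = mul (f x) (f y) := by
  have hbilin : mulₗ.compr₂ f = mulₗ.compl₁₂ f f := b.ext fun i => b.ext fun j => hf i j
  exact LinearMap.congr_fun₂ hbilin x y

section Imaginary

variable {x y : SplitOct}

lemma re_eq_zero_of_mem_Im (hx : x ∈ Im) : re x = 0 := by
  have := congrArg (fun z : SplitOct => z.1.re) (mem_Im_iff.mp hx)
  simp only [conj, Prod.fst_neg, Quaternion.re_star, Quaternion.re_neg] at this
  rw [re_apply]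
  linarith

lemma re_mul_of_mem_Im (hy : y ∈ Im) : re (mul x y) = -polar x y := by
  rw [← re_mul_conj, mem_Im_iff.mp hy, mul_neg_right, map_neg, neg_neg]

lemma mul_self_of_mem_Im (hx : x ∈ Im) : mul x x = -q x • one := by
  have := mul_conj_self x
  rw [mem_Im_iff.mp hx, mul_neg_right] at this
  rw [neg_smul, ← this, neg_neg]

lemma mul_add_mul_of_mem_Im (hx : x ∈ Im) (hy : y ∈ Im) :
    mul x y + mul y x = -(2 * polar x y) • one := by
  have := mul_conj_add_mul_conj x y
  rw [mem_Im_iff.mp hx, mem_Im_iff.mp hy, mul_neg_right, mul_neg_right, ← neg_add] at this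
  rw [neg_smul, ← this, neg_neg]

lemma mul_comm_of_polar_eq_zero (hx : x ∈ Im) (hy : y ∈ Im) (hxy : polar x y = 0) :
    mul y x = -mul x y := by
  have := mul_add_mul_of_mem_Im hx hy
  rw [hxy, mul_zero, neg_zero, zero_smul] at this
  exact eq_neg_of_add_eq_zero_right this

lemma mul_mem_Im_of_polar_eq_zero (hx : x ∈ Im) (hy : y ∈ Im) (hxy : polar x y = 0) :
    mul x y ∈ Im := by
  rw [mem_Im_iff, conj_mul, mem_Im_iff.mp hx, mem_Im_iff.mp hy, mul_neg_left, mul_neg_right,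
    neg_neg, mul_comm_of_polar_eq_zero hx hy hxy]

lemma cross_eq_mul_of_mem_Im (hxy : mul x y ∈ Im) : cross x y = mul x y := by
  rw [cross, mem_Im_iff.mp hxy]
  module

end Imaginary

structure IsNullTriple (u v w : SplitOct) : Prop where
  mem₁ : u ∈ Im
  mem₂ : v ∈ Im
  mem₃ : w ∈ Im
  q₁ : q u = 0
  q₂ : q v = 0
  q₃ : q w = 0
  polar₁₂ : polar u v = 0
  polar₂₃ : polar v w = 0
  polar₃₁ : polar w u = 0
  triple_eq : triple u v w = √2

namespace IsNullTriple

variable {u v w : SplitOct}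

lemma mul₁_self (h : IsNullTriple u v w) : mul u u = 0 := by
  rw [mul_self_of_mem_Im h.mem₁, h.q₁, neg_zero, zero_smul]

lemma mul₂₁ (h : IsNullTriple u v w) : mul v u = -mul u v :=
  mul_comm_of_polar_eq_zero h.mem₁ h.mem₂ h.polar₁₂

lemma mul₁₂_mem (h : IsNullTriple u v w) : mul u v ∈ Im :=
  mul_mem_Im_of_polar_eq_zero h.mem₁ h.mem₂ h.polar₁₂

lemma polar_mul₁₂ (h : IsNullTriple u v w) : polar (mul u v) w = √2 := by
  rw [← cross_eq_mul_of_mem_Im h.mul₁₂_mem]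
  exact h.triple_eq

lemma rotate (h : IsNullTriple u v w) : IsNullTriple v w u where
  mem₁ := h.mem₂
  mem₂ := h.mem₃
  mem₃ := h.mem₁
  q₁ := h.q₂
  q₂ := h.q₃
  q₃ := h.q₁
  polar₁₂ := h.polar₂₃
  polar₂₃ := h.polar₃₁
  polar₃₁ := h.polar₁₂
  triple_eq := by
    have hvw := mul_mem_Im_of_polar_eq_zero h.mem₂ h.mem₃ h.polar₂₃
    rw [triple, cross_eq_mul_of_mem_Im hvw, polar_mul_left, mem_Im_iff.mp h.mem₂, mul_neg_left,
      h.mul₂₁, neg_neg, polar_comm, h.polar_mul₁₂]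

lemma mul_mul_rotate (h : IsNullTriple u v w) : mul v (mul w u) = mul u (mul v w) := by
  have := mul_mul_add_mul_mul_left u v w
  rw [h.mul₂₁, add_neg_cancel, mul_zero_left, h.rotate.rotate.mul₂₁, mul_neg_right,
    add_neg_eq_zero] at this
  exact this.symm

lemma mul₃_mul₁₂ (h : IsNullTriple u v w) : mul w (mul u v) = mul u (mul v w) :=
  h.rotate.mul_mul_rotate.trans h.mul_mul_rotate

lemma mul₁_mul₁₂ (h : IsNullTriple u v w) : mul u (mul u v) = 0 := by
  rw [mul_mul_self_left, h.mul₁_self, mul_zero_left]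

lemma mul₁₂_mul₂ (h : IsNullTriple u v w) : mul (mul u v) v = 0 := by
  rw [mul_mul_self_right, h.rotate.mul₁_self, mul_zero_right]

lemma mul₂_mul₁₂ (h : IsNullTriple u v w) : mul v (mul u v) = 0 := by
  have := mul_mul_add_mul_mul_left v u v
  rwa [h.rotate.mul₁_self, mul_zero_right, add_zero, h.mul₂₁, neg_add_cancel,
    mul_zero_left] at this

lemma mul₁₂_mul₁ (h : IsNullTriple u v w) : mul (mul u v) u = 0 := by
  have := mul_mul_add_mul_mul_right u v u
  rwa [h.mul₁_self, mul_zero_left, add_zero, h.mul₂₁, neg_add_cancel, mul_zero_right] at this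

lemma mul₁₂_mul₃ (h : IsNullTriple u v w) :
    mul (mul u v) w = -(2 * √2) • one - mul u (mul v w) := by
  have := mul_add_mul_of_mem_Im h.mul₁₂_mem h.mem₃
  rw [h.polar_mul₁₂, h.mul₃_mul₁₂] at this
  exact eq_sub_of_add_eq this

lemma mul₁₂_self (h : IsNullTriple u v w) : mul (mul u v) (mul u v) = 0 := by
  have := mul_mul_add_mul_mul_left (mul u v) u v
  rwa [h.mul₁₂_mul₂, mul_zero_right, add_zero, h.mul₁₂_mul₁, h.mul₁_mul₁₂, add_zero,
    mul_zero_left] at this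

lemma mul₁_mul₁₂₃ (h : IsNullTriple u v w) : mul u (mul u (mul v w)) = 0 := by
  rw [mul_mul_self_left, h.mul₁_self, mul_zero_left]

lemma mul₁₂₃_mul₁ (h : IsNullTriple u v w) : mul (mul u (mul v w)) u = -(2 * √2) • u := by
  have := mul_mul_add_mul_mul_right u (mul v w) u
  rw [h.mul₁_self, mul_zero_left, add_zero, add_comm,
    mul_add_mul_of_mem_Im h.mem₁ h.rotate.mul₁₂_mem, polar_comm, h.rotate.polar_mul₁₂,
    mul_smul_right, mul_one_right] at this
  exact this

/- `h.rotate` brackets the triple product as `v (w u)`, so the rotated forms of lemmas whose left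
side contains `u (v w)` are stated separately. -/
lemma mul₂_mul₁₂₃ (h : IsNullTriple u v w) : mul v (mul u (mul v w)) = 0 := by
  rw [← h.mul_mul_rotate]
  exact h.rotate.mul₁_mul₁₂₃

lemma mul₃_mul₁₂₃ (h : IsNullTriple u v w) : mul w (mul u (mul v w)) = 0 := by
  rw [← h.mul₃_mul₁₂]
  exact h.rotate.rotate.mul₁_mul₁₂₃

lemma mul₁₂₃_mul₂ (h : IsNullTriple u v w) : mul (mul u (mul v w)) v = -(2 * √2) • v := by
  rw [← h.mul_mul_rotate]
  exact h.rotate.mul₁₂₃_mul₁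

lemma mul₁₂₃_mul₃ (h : IsNullTriple u v w) : mul (mul u (mul v w)) w = -(2 * √2) • w := by
  rw [← h.mul₃_mul₁₂]
  exact h.rotate.rotate.mul₁₂₃_mul₁

lemma mul₁₂₃_self (h : IsNullTriple u v w) :
    mul (mul u (mul v w)) (mul u (mul v w)) = -(2 * √2) • mul u (mul v w) := by
  have := mul_mul_add_mul_mul_left (mul u (mul v w)) u (mul v w)
  rwa [mul_mul_self_right, h.rotate.mul₁₂_self, mul_zero_right, mul_zero_right, add_zero,
    h.mul₁₂₃_mul₁, h.mul₁_mul₁₂₃, add_zero, mul_smul_left] at this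

lemma mul₁₂₃_mul₁₂ (h : IsNullTriple u v w) : mul (mul u (mul v w)) (mul u v) = 0 := by
  have := mul_mul_add_mul_mul_left (mul u (mul v w)) u v
  rwa [h.mul₁₂₃_mul₁, h.mul₁_mul₁₂₃, add_zero, h.mul₁₂₃_mul₂, mul_smul_right, mul_smul_left,
    add_eq_right] at this

lemma mul₁₂_mul₁₂₃ (h : IsNullTriple u v w) :
    mul (mul u v) (mul u (mul v w)) = -(2 * √2) • mul u v := by
  have := mul_mul_add_mul_mul_right u v (mul u (mul v w))
  rwa [h.mul₁_mul₁₂₃, mul_zero_left, add_zero, h.mul₂_mul₁₂₃, zero_add, h.mul₁₂₃_mul₂,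
    mul_smul_right] at this

lemma mul₁₂_mul₂₃ (h : IsNullTriple u v w) : mul (mul u v) (mul v w) = (2 * √2) • v := by
  have := mul_mul_add_mul_mul_right u v (mul v w)
  rw [h.rotate.mul₁_mul₁₂, h.rotate.mul₁₂_mul₁, add_zero, mul_zero_right, h.mul₁₂₃_mul₂,
    neg_smul, ← sub_eq_add_neg, sub_eq_zero] at this
  exact this

lemma mul₂₃_mul₁₂ (h : IsNullTriple u v w) : mul (mul v w) (mul u v) = -(2 * √2) • v := by
  have := mul_mul_add_mul_mul_right v w (mul u v)
  rwa [h.mul₂_mul₁₂, mul_zero_left, add_zero, mul_add_mul_of_mem_Im h.mem₃ h.mul₁₂_mem,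
    polar_comm, h.polar_mul₁₂, mul_smul_right, mul_one_right] at this

lemma mul₂₃_mul₁₂₃ (h : IsNullTriple u v w) :
    mul (mul v w) (mul u (mul v w)) = -(2 * √2) • mul v w := by
  rw [← h.mul_mul_rotate]
  exact h.rotate.mul₁₂_mul₁₂₃

lemma mul₃₁_mul₁₂₃ (h : IsNullTriple u v w) :
    mul (mul w u) (mul u (mul v w)) = -(2 * √2) • mul w u := by
  rw [← h.mul₃_mul₁₂]
  exact h.rotate.rotate.mul₁₂_mul₁₂₃

lemma mul₁₂₃_mul₂₃ (h : IsNullTriple u v w) : mul (mul u (mul v w)) (mul v w) = 0 := by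
  rw [← h.mul_mul_rotate]
  exact h.rotate.mul₁₂₃_mul₁₂

lemma mul₁₂₃_mul₃₁ (h : IsNullTriple u v w) : mul (mul u (mul v w)) (mul w u) = 0 := by
  rw [← h.mul₃_mul₁₂]
  exact h.rotate.rotate.mul₁₂₃_mul₁₂

lemma re_mul₁₂₃ (h : IsNullTriple u v w) : re (mul u (mul v w)) = -√2 := by
  rw [re_mul_of_mem_Im h.rotate.mul₁₂_mem, polar_comm, h.rotate.polar_mul₁₂]

end IsNullTriple

def frame (u v w : SplitOct) : Fin 8 → SplitOct :=
  ![one, u, v, w, mul u v, mul v w, mul w u, mul u (mul v w)]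

/-- Entry `(i, j)` is the product of the `i`-th and `j`-th elements of the frame of a null triple,
written in terms of the frame (`IsNullTriple.mul_frame`). -/
def frameTable {M : Type*} [AddCommGroup M] [Module ℝ M] (e : Fin 8 → M) :
    Matrix (Fin 8) (Fin 8) M :=
  !![e 0, e 1, e 2, e 3, e 4, e 5, e 6, e 7;
     e 1, 0, e 4, -e 6, 0, e 7, 0, 0;
     e 2, -e 4, 0, e 5, 0, 0, e 7, 0;
     e 3, e 6, -e 5, 0, e 7, 0, 0, 0;
     e 4, 0, 0, -(2 * √2) • e 0 - e 7, 0, (2 * √2) • e 2, -(2 * √2) • e 1, -(2 * √2) • e 4;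
     e 5, -(2 * √2) • e 0 - e 7, 0, 0, -(2 * √2) • e 2, 0, (2 * √2) • e 3, -(2 * √2) • e 5;
     e 6, 0, -(2 * √2) • e 0 - e 7, 0, (2 * √2) • e 1, -(2 * √2) • e 3, 0, -(2 * √2) • e 6;
     e 7, -(2 * √2) • e 1, -(2 * √2) • e 2, -(2 * √2) • e 3, 0, 0, 0, -(2 * √2) • e 7]

lemma map_frameTable {M N : Type*} [AddCommGroup M] [Module ℝ M] [AddCommGroup N] [Module ℝ N]
    (f : M →ₗ[ℝ] N) (e : Fin 8 → M) (i j : Fin 8) :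
    f (frameTable e i j) = frameTable (f ∘ e) i j := by
  fin_cases i <;> fin_cases j <;> simp [frameTable]

namespace IsNullTriple

variable {u v w : SplitOct}

lemma mul_frame (h : IsNullTriple u v w) (i j : Fin 8) :
    mul (frame u v w i) (frame u v w j) = frameTable (frame u v w) i j := by
  have r := h.rotate
  have rr := r.rotate
  fin_cases i <;> fin_cases j <;>
    simp [frame, frameTable, mul_one_left, mul_one_right, h.mul₁_self, r.mul₁_self, rr.mul₁_self,
      h.mul₂₁, r.mul₂₁, rr.mul₂₁, h.mul_mul_rotate, h.mul₃_mul₁₂,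
      h.mul₁_mul₁₂, r.mul₁_mul₁₂, rr.mul₁_mul₁₂, h.mul₂_mul₁₂, r.mul₂_mul₁₂, rr.mul₂_mul₁₂,
      h.mul₁₂_mul₁, r.mul₁₂_mul₁, rr.mul₁₂_mul₁, h.mul₁₂_mul₂, r.mul₁₂_mul₂, rr.mul₁₂_mul₂,
      h.mul₁₂_mul₃, r.mul₁₂_mul₃, rr.mul₁₂_mul₃, h.mul₁₂_self, r.mul₁₂_self, rr.mul₁₂_self,
      h.mul₁₂_mul₂₃, r.mul₁₂_mul₂₃, rr.mul₁₂_mul₂₃, h.mul₂₃_mul₁₂, r.mul₂₃_mul₁₂, rr.mul₂₃_mul₁₂,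
      h.mul₁_mul₁₂₃, h.mul₂_mul₁₂₃, h.mul₃_mul₁₂₃, h.mul₁₂₃_mul₁, h.mul₁₂₃_mul₂, h.mul₁₂₃_mul₃,
      h.mul₁₂_mul₁₂₃, h.mul₂₃_mul₁₂₃, h.mul₃₁_mul₁₂₃, h.mul₁₂₃_mul₁₂, h.mul₁₂₃_mul₂₃,
      h.mul₁₂₃_mul₃₁, h.mul₁₂₃_self]

lemma re_frame (h : IsNullTriple u v w) : re ∘ frame u v w = ![1, 0, 0, 0, 0, 0, 0, -√2] := by
  ext i
  fin_cases i <;> simp [frame, re_one, re_eq_zero_of_mem_Im, h.mem₁, h.mem₂, h.mem₃,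
    h.mul₁₂_mem, h.rotate.mul₁₂_mem, h.rotate.rotate.mul₁₂_mem, h.re_mul₁₂₃]

lemma linearIndependent_frame (h : IsNullTriple u v w) : LinearIndependent ℝ (frame u v w) := by
  rw [Fintype.linearIndependent_iff]
  intro g hg
  have pair (j : Fin 8) : ∑ i, g i * re (frameTable (frame u v w) i j) = 0 := by
    simpa [mulₗ, ← h.mul_frame] using congrArg (fun x => re (mulₗ x (frame u v w j))) hg
  simp only [map_frameTable, h.re_frame] at pair
  have hc : -(2 * √2) + √2 = -√2 := by ring
  simp [Fin.forall_fin_succ, Fin.sum_univ_eight, frameTable, hc] at pair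
  obtain ⟨e0, g5, g6, g4, g3, g1, g2, e7⟩ := pair
  have hs : √2 * √2 = 2 := Real.mul_self_sqrt zero_le_two
  have g7 : g 7 = 0 := by linear_combination (e7 + √2 * e0) / 2 - g 7 / 2 * hs
  have g0 : g 0 = 0 := by linear_combination e0 + √2 * g7
  intro i
  fin_cases i <;> assumption

noncomputable def frameBasis (h : IsNullTriple u v w) : Module.Basis (Fin 8) ℝ SplitOct :=
  basisOfLinearIndependentOfCardEqFinrank h.linearIndependent_frame
    (by simp [Module.finrank_prod, Quaternion.finrank_eq_four])

lemma coe_frameBasis (h : IsNullTriple u v w) : ⇑h.frameBasis = frame u v w :=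
  coe_basisOfLinearIndependentOfCardEqFinrank _ _

lemma map_mul_of_map_frame {u' v' w' : SplitOct} (h : IsNullTriple u v w)
    (h' : IsNullTriple u' v' w') (f : SplitOct →ₗ[ℝ] SplitOct)
    (hf : ∀ i, f (frame u v w i) = frame u' v' w' i) (x y : SplitOct) :
    f (mul x y) = mul (f x) (f y) := by
  refine map_mul_of_basis h.frameBasis f (fun i j => ?_) x y
  have hf' : ⇑f ∘ frame u v w = frame u' v' w' := funext hf
  rw [coe_frameBasis, h.mul_frame, map_frameTable, hf', hf, hf, h'.mul_frame]

end IsNullTriple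

lemma map_frame_of_map_mul {f : SplitOct → SplitOct} (hmul : ∀ x y, f (mul x y) = mul (f x) (f y))
    (hone : f one = one) {u v w u' v' w' : SplitOct} (hu : f u = u') (hv : f v = v')
    (hw : f w = w') (i : Fin 8) : f (frame u v w i) = frame u' v' w' i := by
  fin_cases i <;> simp [frame, hmul, hone, hu, hv, hw]

theorem existsUnique_automorphism_of_null_triples_general
    (u v w u' v' w' : SplitOct)
    (hu : u ∈ Im) (hv : v ∈ Im) (hw : w ∈ Im)
    (hqu : q u = 0) (hqv : q v = 0) (hqw : q w = 0)
    (huv : polar u v = 0) (huw : polar u w = 0) (hvw : polar v w = 0)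
    (hΩ : triple u v w = Real.sqrt 2)
    (hu' : u' ∈ Im) (hv' : v' ∈ Im) (hw' : w' ∈ Im)
    (hqu' : q u' = 0) (hqv' : q v' = 0) (hqw' : q w' = 0)
    (huv' : polar u' v' = 0) (huw' : polar u' w' = 0) (hvw' : polar v' w' = 0)
    (hΩ' : triple u' v' w' = Real.sqrt 2) :
    ∃! ψ : SplitOct ≃ₗ[ℝ] SplitOct,
      (∀ x y : SplitOct, ψ (mul x y) = mul (ψ x) (ψ y)) ∧
        ψ u = u' ∧ ψ v = v' ∧ ψ w = w' := by
  have h : IsNullTriple u v w :=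
    ⟨hu, hv, hw, hqu, hqv, hqw, huv, hvw, polar_comm w u ▸ huw, hΩ⟩
  have h' : IsNullTriple u' v' w' :=
    ⟨hu', hv', hw', hqu', hqv', hqw', huv', hvw', polar_comm w' u' ▸ huw', hΩ'⟩
  let ψ := h.frameBasis.equiv h'.frameBasis (Equiv.refl _)
  have hψ (i : Fin 8) : ψ (frame u v w i) = frame u' v' w' i := by
    have := h.frameBasis.equiv_apply i h'.frameBasis (Equiv.refl _)
    rwa [h.coe_frameBasis, h'.coe_frameBasis] at this
  refine ⟨ψ, ⟨h.map_mul_of_map_frame h' ψ hψ, hψ 1, hψ 2, hψ 3⟩, ?_⟩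
  rintro φ ⟨hφ, hφu, hφv, hφw⟩
  have hφ₁ := map_one_of_map_mul φ.surjective hφ
  refine LinearEquiv.toLinearMap_injective (h.frameBasis.ext fun i => ?_)
  simp [h.coe_frameBasis, map_frame_of_map_mul hφ hφ₁ hφu hφv hφw, hψ]

/-- Simple transitivity of the automorphism group of the split octonions on
null Stiefel triples: triples of nonzero isotropic pairwise orthogonal vectors with
`Ω (u,v,w) = √2`. -/
theorem existsUnique_automorphism_of_null_triples
    (u v w u' v' w' : SplitOct)
    (hu : u ∈ Im) (hv : v ∈ Im) (hw : w ∈ Im)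
    (hu0 : u ≠ 0) (hv0 : v ≠ 0) (hw0 : w ≠ 0)
    (hqu : q u = 0) (hqv : q v = 0) (hqw : q w = 0)
    (huv : polar u v = 0) (huw : polar u w = 0) (hvw : polar v w = 0)
    (hΩ : triple u v w = Real.sqrt 2)
    (hu' : u' ∈ Im) (hv' : v' ∈ Im) (hw' : w' ∈ Im)
    (hu0' : u' ≠ 0) (hv0' : v' ≠ 0) (hw0' : w' ≠ 0)
    (hqu' : q u' = 0) (hqv' : q v' = 0) (hqw' : q w' = 0)
    (huv' : polar u' v' = 0) (huw' : polar u' w' = 0) (hvw' : polar v' w' = 0)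
    (hΩ' : triple u' v' w' = Real.sqrt 2) :
    ∃! ψ : SplitOct ≃ₗ[ℝ] SplitOct,
      (∀ x y : SplitOct, ψ (mul x y) = mul (ψ x) (ψ y)) ∧
        ψ u = u' ∧ ψ v = v' ∧ ψ w = w' :=
  existsUnique_automorphism_of_null_triples_general u v w u' v' w' hu hv hw hqu hqv hqw huv huw hvw
    hΩ hu' hv' hw' hqu' hqv' hqw' huv' huw' hvw' hΩ'

end SplitOct
end
end

section
/- Let P ⊆ Im(O') be a spacelike cross-closed 3-plane. The map sending a pair ([u], v), where [u] is a line in P with unit representative u (q(u) = 1) and v ∈ P⊥ with q(v) = −1, to the line ℝ(u + u×v), is well defined (independent of the choice of unit representative ±u of [u]) and is a bijection from {lines in P} × {v ∈ P⊥ : q(v) = −1} onto the set of isotropic lines of Im(O'). -/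
/-!
Since `P` is spacelike, `Im 𝕆' = P ⊕ P⊥`, and `P⊥` is negative definite: the first components of
`P` fill `Im ℍ`, so a nonzero `n ∈ P⊥` with `n.1 ≠ 0` is orthogonal to some `p ∈ P` with
`p.1 = n.1`, and Cauchy–Schwarz on the second components forces `‖n.2‖ > ‖n.1‖`. An isotropic
`x` therefore splits uniquely as `p + n` with `q p = -q n > 0`, and after rescaling `x ∝ u + m`
with `q u = 1`, `q m = -1`. On `u⊥` the identity `u × (u × w) = ⟨u,w⟩ u - q(u) w` makes `u × ·`
an anti-involution, and cross-closedness of `P` makes it preserve `P⊥`; hence `m = u × v` for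
exactly one `v ∈ P⊥`, namely `v = -(u × m)`.
-/

noncomputable section

open Quaternion

namespace SplitOct

lemma mem_Im_iff_re_eq_zero {x : SplitOct} : x ∈ Im ↔ x.1.re = 0 := by
  simp [mem_Im_iff, conj, Prod.ext_iff, Quaternion.star_eq_neg]

lemma polar_self (x : SplitOct) : polar x x = q x := by
  simp only [polar_apply, q_apply, ← Quaternion.inner_def, Quaternion.inner_self]

lemma q_add (x y : SplitOct) : q (x + y) = q x + q y + 2 * polar x y := by
  simp only [polar]; ring

lemma q_smul (r : ℝ) (x : SplitOct) : q (r • x) = r ^ 2 * q x := by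
  rw [← polar_self, polar_smul_left, polar_smul_right, polar_self]; ring

lemma q_zero : q 0 = 0 := by
  simpa using q_smul 0 0

lemma ne_zero_of_q_ne_zero {x : SplitOct} (hx : q x ≠ 0) : x ≠ 0 := by
  rintro rfl; exact hx q_zero

lemma cross_neg_right (x y : SplitOct) : cross x (-y) = -cross x y := by
  rw [← neg_one_smul ℝ y, cross_smul_right, neg_one_smul]

lemma cross_sub_right (x y y' : SplitOct) : cross x (y - y') = cross x y - cross x y' := by
  rw [sub_eq_add_neg, cross_add_right, cross_neg_right, sub_eq_add_neg]

lemma cross_eq (x y : SplitOct) : cross x y = ((mul x y).1.im, (mul x y).2) := by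
  ext <;> simp only [cross, conj, Prod.smul_fst, Prod.smul_snd, Prod.fst_sub, Prod.snd_sub,
    sub_neg_eq_add, smul_eq_mul, re_smul, re_sub, re_add, re_star, re_im, imI_smul, imI_sub,
    imI_add, imI_star, imI_im, imJ_smul, imJ_sub, imJ_add, imJ_star, imJ_im, imK_smul, imK_sub,
    imK_add, imK_star, imK_im] <;> ring

lemma polar_cross_self_left {u v : SplitOct} (hu : u ∈ Im) (hv : v ∈ Im) :
    polar (cross u v) u = 0 := by
  rw [mem_Im_iff_re_eq_zero] at hu hv
  simp only [cross_eq, mul, polar_apply, re_add, re_mul, re_star, re_im, imI_add, imI_mul,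
    imI_star, imI_im, imJ_add, imJ_mul, imJ_star, imJ_im, imK_add, imK_mul, imK_star, imK_im,
    hu, hv]
  ring

lemma q_cross {u v : SplitOct} (hu : u ∈ Im) (hv : v ∈ Im) :
    q (cross u v) = q u * q v - polar u v ^ 2 := by
  rw [mem_Im_iff_re_eq_zero] at hu hv
  simp only [cross_eq, mul, polar_apply, q_apply, normSq_def', re_add, re_mul, re_star, re_im,
    imI_add, imI_mul, imI_star, imI_im, imJ_add, imJ_mul, imJ_star, imJ_im, imK_add, imK_mul,
    imK_star, imK_im, hu, hv]
  ring

lemma cross_cross_self {u v : SplitOct} (hu : u ∈ Im) (hv : v ∈ Im) :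
    cross u (cross u v) = polar u v • u - q u • v := by
  rw [mem_Im_iff_re_eq_zero] at hu hv
  ext <;> simp only [cross_eq, mul, polar_apply, q_apply, normSq_def', Prod.fst_sub,
    Prod.snd_sub, Prod.smul_fst, Prod.smul_snd, smul_eq_mul, re_sub, re_smul, re_add, re_mul,
    re_star, re_im, imI_sub, imI_smul, imI_add, imI_mul, imI_star, imI_im, imJ_sub, imJ_smul,
    imJ_add, imJ_mul, imJ_star, imJ_im, imK_sub, imK_smul, imK_add, imK_mul, imK_star, imK_im,
    hu, hv] <;> ring

lemma triple_cyclic {u v w : SplitOct} (hu : u ∈ Im) (hv : v ∈ Im) (hw : w ∈ Im) :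
    triple u v w = triple w u v := by
  rw [mem_Im_iff_re_eq_zero] at hu hv hw
  simp only [triple, cross_eq, mul, polar_apply, re_add, re_mul, re_star, re_im, imI_add, imI_mul,
    imI_star, imI_im, imJ_add, imJ_mul, imJ_star, imJ_im, imK_add, imK_mul, imK_star, imK_im,
    hu, hv, hw]
  ring

lemma eq_zero_of_cross_eq_zero {u v : SplitOct} (hu : u ∈ Im) (hv : v ∈ Im)
    (huv : polar u v = 0) (hqu : q u ≠ 0) (h : cross u v = 0) : v = 0 := by
  have := cross_cross_self hu hv
  rw [h, cross_zero_right, huv, zero_smul, zero_sub, eq_comm, neg_eq_zero] at this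
  exact (smul_eq_zero.1 this).resolve_left hqu

lemma add_cross_mem_span {u u' : SplitOct} (v : SplitOct) (h : u' ∈ Submodule.span ℝ {u}) :
    u' + cross u' v ∈ Submodule.span ℝ {u + cross u v} := by
  obtain ⟨c, rfl⟩ := Submodule.mem_span_singleton.1 h
  rw [cross_smul_left, ← smul_add]
  exact Submodule.smul_mem _ c (Submodule.mem_span_singleton_self _)

lemma span_add_cross_eq_of_span_eq {u u' : SplitOct} (v : SplitOct)
    (h : Submodule.span ℝ {u} = Submodule.span ℝ {u'}) :
    Submodule.span ℝ {u + cross u v} = Submodule.span ℝ {u' + cross u' v} := by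
  apply le_antisymm <;> rw [Submodule.span_singleton_le_iff_mem] <;> apply add_cross_mem_span
  · exact h ▸ Submodule.mem_span_singleton_self u
  · exact h ▸ Submodule.mem_span_singleton_self u'

lemma isIsotropicLine_span_add_cross {u v : SplitOct} (hu : u ∈ Im) (hv : v ∈ Im)
    (huv : polar u v = 0) (hqu : q u ≠ 0) (hqv : q v = -1) :
    IsIsotropicLine (Submodule.span ℝ {u + cross u v}) := by
  refine ⟨_, Im.add_mem hu (cross_mem_Im u v), fun h => hqu ?_, ?_, rfl⟩
  · have := polar_add_left u (cross u v) u
    rwa [h, polar_zero_left, polar_self, polar_cross_self_left hu hv, add_zero, eq_comm] at this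
  · rw [q_add, q_cross hu hv, polar_comm u (cross u v), polar_cross_self_left hu hv, huv, hqv]
    ring

section orth

variable {P : Submodule ℝ SplitOct}

lemma polar_eq_zero_of_mem_orth {x y : SplitOct} (hx : x ∈ orth P) (hy : y ∈ P) :
    polar y x = 0 := by
  rw [polar_comm]; exact hx.2 y hy

lemma cross_mem_orth (hPIm : P ≤ Im) (hPcross : ∀ u ∈ P, ∀ v ∈ P, cross u v ∈ P)
    {u v : SplitOct} (hu : u ∈ P) (hv : v ∈ orth P) : cross u v ∈ orth P := by
  refine ⟨cross_mem_Im u v, fun y hy => ?_⟩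
  rw [← triple, triple_cyclic (hPIm hu) hv.1 (hPIm hy), triple]
  exact polar_eq_zero_of_mem_orth hv (hPcross y hy u hu)

lemma eq_zero_of_mem_of_mem_orth (hPpos : ∀ v ∈ P, v ≠ 0 → 0 < q v) {x : SplitOct}
    (hx : x ∈ P) (hx' : x ∈ orth P) : x = 0 := by
  by_contra hne
  have := hPpos x hx hne
  rw [← polar_self, hx'.2 x hx] at this
  exact lt_irrefl 0 this

def polarForm : LinearMap.BilinForm ℝ SplitOct :=
  LinearMap.mk₂ ℝ polar polar_add_left polar_smul_left polar_add_right polar_smul_right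

lemma exists_add_mem_orth (hPIm : P ≤ Im) (hPpos : ∀ v ∈ P, v ≠ 0 → 0 < q v) {x : SplitOct}
    (hx : x ∈ Im) : ∃ p ∈ P, ∃ n ∈ orth P, x = p + n := by
  have hrefl : polarForm.IsRefl := fun x y h => (polar_comm y x).trans h
  have hdisj : Disjoint P (polarForm.orthogonal P) := by
    refine Submodule.disjoint_def.2 fun y hy hy' => by_contra fun hne => ?_
    have := hPpos y hy hne
    rw [← polar_self] at this
    exact this.ne' (hy' y hy)
  have hcompl := LinearMap.BilinForm.isCompl_orthogonal_of_restrict_nondegenerate hrefl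
    (polarForm.nondegenerate_restrict_of_disjoint_orthogonal hrefl hdisj)
  obtain ⟨p, hp, n, hn, rfl⟩ :=
    Submodule.mem_sup.1 (hcompl.sup_eq_top ▸ Submodule.mem_top (x := x))
  refine ⟨p, hp, n, ⟨by simpa using Im.sub_mem hx (hPIm hp), fun y hy => ?_⟩, rfl⟩
  rw [polar_comm]
  exact hn y hy

lemma exists_mem_fst_eq (hPIm : P ≤ Im) (hPdim : Module.finrank ℝ P = 3)
    (hPpos : ∀ v ∈ P, v ≠ 0 → 0 < q v) {a : ℍ[ℝ]} (ha : a.re = 0) : ∃ p ∈ P, p.1 = a := by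
  let f := (LinearMap.fst ℝ ℍ[ℝ] ℍ[ℝ]).domRestrict P
  let re : ℍ[ℝ] →ₗ[ℝ] ℝ := QuaternionAlgebra.reₗ (-1) 0 (-1)
  have hf : Function.Injective f := by
    rw [← LinearMap.ker_eq_bot, eq_bot_iff]
    rintro ⟨p, hp⟩ (hp1 : p.1 = 0)
    by_contra hne
    have := hPpos p hp (by simpa using hne)
    rw [q_apply, hp1, map_zero, zero_sub, neg_pos] at this
    exact this.not_ge normSq_nonneg
  have hle : LinearMap.range f ≤ LinearMap.ker re := by
    rintro _ ⟨⟨p, hp⟩, rfl⟩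
    exact mem_Im_iff_re_eq_zero.1 (hPIm hp)
  have hre : re ≠ 0 := fun h => one_ne_zero (LinearMap.congr_fun h 1 : (1 : ℝ) = 0)
  have hdim : Module.finrank ℝ (LinearMap.range f) = Module.finrank ℝ (LinearMap.ker re) := by
    have := Module.Dual.finrank_ker_add_one_of_ne_zero hre
    rw [Quaternion.finrank_eq_four] at this
    rw [LinearMap.finrank_range_of_inj hf, hPdim]
    omega
  obtain ⟨⟨p, hp⟩, rfl⟩ : a ∈ LinearMap.range f :=
    Submodule.eq_of_le_of_finrank_eq hle hdim ▸ ha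
  exact ⟨p, hp, rfl⟩

lemma q_lt_zero_of_mem_orth (hPIm : P ≤ Im) (hPdim : Module.finrank ℝ P = 3)
    (hPpos : ∀ v ∈ P, v ≠ 0 → 0 < q v) {n : SplitOct} (hn : n ∈ orth P) (hn0 : n ≠ 0) :
    q n < 0 := by
  rw [q_apply]
  by_cases h1 : n.1 = 0
  · have h2 : n.2 ≠ 0 := fun h2 => hn0 (Prod.ext h1 h2)
    rw [h1, map_zero, zero_sub, neg_neg_iff_pos]
    exact normSq_nonneg.lt_of_ne' (normSq_ne_zero.2 h2)
  obtain ⟨p, hp, hp1⟩ := exists_mem_fst_eq hPIm hPdim hPpos (mem_Im_iff_re_eq_zero.1 hn.1)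
  have hqp : normSq p.2 < normSq n.1 := by
    have := hPpos p hp fun h => h1 (by rw [← hp1, h, Prod.fst_zero])
    rw [q_apply, hp1] at this
    linarith
  have hinner : inner ℝ n.2 p.2 = normSq n.1 := by
    have := hn.2 p hp
    rw [polar_apply, hp1, ← inner_def, ← inner_def, inner_self] at this
    linarith
  have hcs := real_inner_mul_inner_self_le n.2 p.2
  rw [hinner, inner_self, inner_self] at hcs
  have hA : 0 < normSq n.1 := normSq_nonneg.lt_of_ne' (normSq_ne_zero.2 h1)
  nlinarith [mul_le_mul_of_nonneg_right (le_of_lt hqp) (normSq_nonneg (a := n.2)),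
    normSq_nonneg (a := p.2)]

lemma exists_span_add_cross_eq (hPIm : P ≤ Im) (hPdim : Module.finrank ℝ P = 3)
    (hPpos : ∀ v ∈ P, v ≠ 0 → 0 < q v) (hPcross : ∀ u ∈ P, ∀ v ∈ P, cross u v ∈ P)
    {x : SplitOct} (hx : x ∈ Im) (hx0 : x ≠ 0) (hqx : q x = 0) :
    ∃ u ∈ P, q u = 1 ∧ ∃ v ∈ orth P, q v = -1 ∧
      Submodule.span ℝ {u + cross u v} = Submodule.span ℝ {x} := by
  obtain ⟨p, hp, n, hn, rfl⟩ := exists_add_mem_orth hPIm hPpos hx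
  have hqn : q n = -q p := by
    rw [q_add, polar_eq_zero_of_mem_orth hn hp] at hqx
    linarith
  have hqp : 0 < q p := by
    refine hPpos p hp fun hp0 => ?_
    subst hp0
    rw [zero_add] at hx0
    exact (q_lt_zero_of_mem_orth hPIm hPdim hPpos hn hx0).ne (by rw [hqn, q_zero, neg_zero])
  set r := Real.sqrt (q p)
  have hr : r ≠ 0 := (Real.sqrt_pos.2 hqp).ne'
  have hr2 : r⁻¹ ^ 2 * q p = 1 := by
    rw [inv_pow, Real.sq_sqrt hqp.le, inv_mul_cancel₀ hqp.ne']
  set u := r⁻¹ • p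
  set m := r⁻¹ • n
  have hu : u ∈ P := P.smul_mem _ hp
  have hm : m ∈ orth P := (orth P).smul_mem _ hn
  have hqu : q u = 1 := by rw [q_smul, hr2]
  have hum : polar u m = 0 := polar_eq_zero_of_mem_orth hm hu
  refine ⟨u, hu, hqu, -cross u m, (orth P).neg_mem (cross_mem_orth hPIm hPcross hu hm), ?_, ?_⟩
  · rw [← neg_one_smul ℝ, q_smul, q_cross (hPIm hu) hm.1, hqu, q_smul, hqn, hum]
    linear_combination -hr2
  · rw [cross_neg_right, cross_cross_self (hPIm hu) hm.1, hum, hqu, zero_smul, one_smul,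
      zero_sub, neg_neg, ← smul_add]
    exact Submodule.span_singleton_smul_eq (inv_ne_zero hr).isUnit _

lemma span_eq_and_eq_of_span_add_cross_eq (hPIm : P ≤ Im)
    (hPpos : ∀ v ∈ P, v ≠ 0 → 0 < q v) (hPcross : ∀ u ∈ P, ∀ v ∈ P, cross u v ∈ P)
    {u u' v v' : SplitOct} (hu : u ∈ P) (hu' : u' ∈ P) (hu0 : u ≠ 0) (hu'0 : u' ≠ 0)
    (hv : v ∈ orth P) (hv' : v' ∈ orth P)
    (h : Submodule.span ℝ {u' + cross u' v'} = Submodule.span ℝ {u + cross u v}) :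
    Submodule.span ℝ {u'} = Submodule.span ℝ {u} ∧ v' = v := by
  obtain ⟨s, hs⟩ := Submodule.mem_span_singleton.1 (h ▸ Submodule.mem_span_singleton_self _)
  rw [smul_add] at hs
  have hu's : u' = s • u := by
    rw [← sub_eq_zero]
    refine eq_zero_of_mem_of_mem_orth hPpos (P.sub_mem hu' (P.smul_mem s hu)) ?_
    have : u' - s • u = s • cross u v - cross u' v' := by linear_combination (norm := module) -hs
    rw [this]
    exact (orth P).sub_mem ((orth P).smul_mem s (cross_mem_orth hPIm hPcross hu hv))
      (cross_mem_orth hPIm hPcross hu' hv')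
  have hs0 : s ≠ 0 := by rintro rfl; exact hu'0 (by rw [hu's, zero_smul])
  refine ⟨hu's ▸ Submodule.span_singleton_smul_eq hs0.isUnit u, ?_⟩
  have hcross : cross u (v' - v) = 0 := by
    rw [hu's, cross_smul_left, add_right_inj] at hs
    rw [cross_sub_right, smul_right_injective SplitOct hs0 hs, sub_self]
  rw [← sub_eq_zero]
  exact eq_zero_of_cross_eq_zero (hPIm hu) ((orth P).sub_mem hv' hv).1
    (polar_eq_zero_of_mem_orth ((orth P).sub_mem hv' hv) hu) (hPpos u hu hu0).ne' hcross

end orth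

/-- For a spacelike cross-closed 3-plane `P`, the map
`([u], v) ↦ ℝ(u + u×v)`, for `[u]` a line in `P` with unit representative `u` and `v ∈ P⊥`
with `q v = -1`, is well defined and a bijection from `{lines in P} × {v ∈ P⊥ : q v = -1}`
onto the set of isotropic lines of `Im 𝕆'`. -/
theorem isotropic_lines_bijection
    (P : Submodule ℝ SplitOct) (hPIm : P ≤ Im)
    (hPdim : Module.finrank ℝ P = 3)
    (hPpos : ∀ v ∈ P, v ≠ 0 → 0 < q v)
    (hPcross : ∀ u ∈ P, ∀ v ∈ P, cross u v ∈ P) :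
    (∀ u u' v : SplitOct, u ∈ P → u' ∈ P → q u = 1 → q u' = 1 →
      Submodule.span ℝ {u} = Submodule.span ℝ {u'} →
      v ∈ orth P → q v = -1 →
      Submodule.span ℝ {u + cross u v} = Submodule.span ℝ {u' + cross u' v}) ∧
    (∀ u v : SplitOct, u ∈ P → q u = 1 → v ∈ orth P → q v = -1 →
      IsIsotropicLine (Submodule.span ℝ {u + cross u v})) ∧
    ∀ ℓ : Submodule ℝ SplitOct, IsIsotropicLine ℓ →
      ∃! p : Submodule ℝ SplitOct × SplitOct,
        p.2 ∈ orth P ∧ q p.2 = -1 ∧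
          ∃ u : SplitOct, u ∈ P ∧ q u = 1 ∧ p.1 = Submodule.span ℝ {u} ∧
            Submodule.span ℝ {u + cross u p.2} = ℓ := by
  refine ⟨fun u u' v _ _ _ _ h _ _ => span_add_cross_eq_of_span_eq v h, ?_, ?_⟩
  · intro u v hu hqu hv hqv
    exact isIsotropicLine_span_add_cross (hPIm hu) hv.1 (polar_eq_zero_of_mem_orth hv hu)
      (hqu ▸ one_ne_zero) hqv
  · rintro _ ⟨x, hx, hx0, hqx, rfl⟩
    obtain ⟨u, hu, hqu, v, hv, hqv, hspan⟩ :=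
      exists_span_add_cross_eq hPIm hPdim hPpos hPcross hx hx0 hqx
    refine ⟨(Submodule.span ℝ {u}, v), ⟨hv, hqv, u, hu, hqu, rfl, hspan⟩, ?_⟩
    rintro ⟨_, v'⟩ ⟨hv', -, u', hu', hqu', rfl, hspan'⟩
    obtain ⟨hspan_u, rfl⟩ := span_eq_and_eq_of_span_add_cross_eq hPIm hPpos hPcross hu hu'
      (ne_zero_of_q_ne_zero (hqu ▸ one_ne_zero)) (ne_zero_of_q_ne_zero (hqu' ▸ one_ne_zero))
      hv hv' (hspan'.trans hspan.symm)
    rw [hspan_u]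

end SplitOct
end
end

section
/- Let u ∈ N with q(u) = 1, let a₁, a₂ ∈ ℝ with a₁² + a₂² = 1, and set v := a₁𝐢 + a₂(𝐢×u). Then R(u,v) = { z + (a₁a₂/(1+a₂²))·(z×u) : z ∈ B }; equivalently, z×u ∈ T for every z ∈ B, and R(u,v) is the graph over B of the linear map Γ : B → T given by Γ(z) = (a₁a₂/(1+a₂²))·(z×u). -/
/-!
In coordinates `P⊥ = 0 × ℍ`, with `T = 0 × span{1, i}` and `B = 0 × span{j, k}`. An element of
`𝒫₀` is determined by `φ 𝐣 ∈ T`, because `φ 𝐢 = 0` and `φ 𝐤 = 𝐢 × φ 𝐣`; so `𝒫₀` is two-dimensional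
and `R(u,v)` is cut out of the four-dimensional `P⊥` by two linear equations. Writing
`u = b𝐣 + c𝐤` with `b² + c² = 1`, one has `uv = a₂𝐢 - a₁(𝐢×u)`, and the two equations express the
`T`-component of `z` as the linear function `(a₁a₂/(1+a₂²))(· × u)` of its `B`-component.
-/

noncomputable section

open Quaternion

namespace SplitOct

/-- The imaginary unit `𝐢 = (i, 0)`. -/
def oi : SplitOct := ((⟨0, 1, 0, 0⟩ : ℍ[ℝ]), 0)

/-- The imaginary unit `𝐣 = (j, 0)`. -/
def oj : SplitOct := ((⟨0, 0, 1, 0⟩ : ℍ[ℝ]), 0)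

/-- The imaginary unit `𝐤 = (k, 0)`. -/
def ok : SplitOct := ((⟨0, 0, 0, 1⟩ : ℍ[ℝ]), 0)

/-- The split unit `𝐥 = (0, 1)`. -/
def ol : SplitOct := (0, 1)

/-- `𝐥𝐢 = 𝐥·𝐢`. -/
def oli : SplitOct := mul ol oi

/-- `𝐥𝐣 = 𝐥·𝐣`. -/
def olj : SplitOct := mul ol oj

/-- `𝐥𝐤 = 𝐥·𝐤`. -/
def olk : SplitOct := mul ol ok

/-- `L = ℝ𝐢`. -/
def Lline : Submodule ℝ SplitOct := Submodule.span ℝ {oi}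

/-- `T = span{𝐥, 𝐥𝐢}`. -/
def Tplane : Submodule ℝ SplitOct := Submodule.span ℝ {ol, oli}

/-- `N = span{𝐣, 𝐤}`. -/
def Nplane : Submodule ℝ SplitOct := Submodule.span ℝ {oj, ok}

/-- `B = span{𝐥𝐣, 𝐥𝐤}`. -/
def Bplane : Submodule ℝ SplitOct := Submodule.span ℝ {olj, olk}

/-- `P = L ⊕ N = span{𝐢, 𝐣, 𝐤}`. -/
def Pplane : Submodule ℝ SplitOct := Submodule.span ℝ {oi, oj, ok}

lemma oi_mem_P : oi ∈ Pplane := Submodule.subset_span (by simp)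

lemma N_le_P : Nplane ≤ Pplane := by
  refine Submodule.span_le.mpr ?_
  rintro x hx
  simp only [Set.mem_insert_iff, Set.mem_singleton_iff] at hx
  rcases hx with rfl | rfl
  · exact Submodule.subset_span (by simp)
  · exact Submodule.subset_span (by simp)

/-- The pencil `𝒫₀` of linear maps `φ : P → Im 𝕆'` with `φ 𝐢 = 0`, `φ N ⊆ T`, and
`φ (𝐢×n) = 𝐢×(φ n)` for all `n ∈ N`. -/
def Pzero : Set (Pplane →ₗ[ℝ] SplitOct) :=
  {φ | (∀ x, φ x ∈ Im) ∧
    φ ⟨oi, oi_mem_P⟩ = 0 ∧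
    (∀ n, ∀ hn : n ∈ Nplane, φ ⟨n, N_le_P hn⟩ ∈ Tplane) ∧
    ∀ n, ∀ hn : n ∈ Nplane, ∀ hmem : cross oi n ∈ Pplane,
      φ ⟨cross oi n, hmem⟩ = cross oi (φ ⟨n, N_le_P hn⟩)}

/-- The subspace `R(u,v) = {z ∈ P⊥ : ⟨φ u, z⟩ + ⟨φ v, (uv)z⟩ = 0 for all φ ∈ 𝒫₀}`. -/
def Rsub (u v : SplitOct) (hu : u ∈ Pplane) (hv : v ∈ Pplane) : Submodule ℝ SplitOct where
  carrier := {z | z ∈ orth Pplane ∧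
    ∀ φ ∈ Pzero, polar (φ ⟨u, hu⟩) z + polar (φ ⟨v, hv⟩) (mul (mul u v) z) = 0}
  add_mem' := by
    rintro a b ⟨ha1, ha2⟩ ⟨hb1, hb2⟩
    refine ⟨(orth Pplane).add_mem ha1 hb1, fun φ hφ => ?_⟩
    rw [mul_add_right, polar_add_right, polar_add_right]
    have h1 := ha2 φ hφ
    have h2 := hb2 φ hφ
    linarith
  zero_mem' := by
    refine ⟨(orth Pplane).zero_mem, fun φ hφ => ?_⟩
    rw [mul_zero_right, polar_zero_right, polar_zero_right, add_zero]
  smul_mem' := by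
    rintro r a ⟨ha1, ha2⟩
    refine ⟨(orth Pplane).smul_mem r ha1, fun φ hφ => ?_⟩
    rw [mul_smul_right, polar_smul_right, polar_smul_right, ← mul_add, ha2 φ hφ, mul_zero]

lemma mul_oi_oj : mul oi oj = ok := by
  have h : (⟨0,1,0,0⟩ : ℍ[ℝ]) * ⟨0,0,1,0⟩ = ⟨0,0,0,1⟩ := by
    ext <;> simp [Quaternion.re_mul, Quaternion.imI_mul, Quaternion.imJ_mul, Quaternion.imK_mul]
  simp [mul, oi, oj, ok, h, Prod.ext_iff]
  exact ⟨h, zero_mul _⟩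

lemma mul_oi_ok : mul oi ok = -oj := by
  have h : (⟨0,1,0,0⟩ : ℍ[ℝ]) * ⟨0,0,0,1⟩ = -⟨0,0,1,0⟩ := by
    ext <;> simp [Quaternion.re_mul, Quaternion.imI_mul, Quaternion.imJ_mul, Quaternion.imK_mul]
  simp [mul, oi, oj, ok, h, Prod.ext_iff]
  exact ⟨h, zero_mul _⟩

lemma conj_ok : conj ok = -ok := by
  simp [conj, ok, Prod.ext_iff]
  apply Quaternion.ext <;> first | rfl | (show (0:ℝ) + 0 * 0 = -0; simp)

lemma conj_oj : conj oj = -oj := by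
  simp [conj, oj, Prod.ext_iff]
  apply Quaternion.ext <;> first | rfl | (show (0:ℝ) + 0 * 0 = -0; simp)

lemma cross_oi_oj : cross oi oj = ok := by
  rw [cross, mul_oi_oj, conj_ok, sub_neg_eq_add, ← two_smul ℝ, smul_smul]
  norm_num

lemma cross_oi_ok : cross oi ok = -oj := by
  rw [cross, mul_oi_ok, conj_neg, conj_oj, neg_neg]
  have h2 : -oj - oj = (2 : ℝ) • (-oj) := by
    rw [two_smul]; abel
  rw [h2, smul_smul]
  norm_num

lemma cross_oi_mem_N {n : SplitOct} (hn : n ∈ Nplane) : cross oi n ∈ Nplane := by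
  induction hn using Submodule.span_induction with
  | mem x hx =>
    simp only [Set.mem_insert_iff, Set.mem_singleton_iff] at hx
    rcases hx with rfl | rfl
    · rw [cross_oi_oj]; exact Submodule.subset_span (by simp)
    · rw [cross_oi_ok]; exact Submodule.neg_mem _ (Submodule.subset_span (by simp))
  | zero => rw [cross_zero_right]; exact Submodule.zero_mem _
  | add x y hx hy ihx ihy => rw [cross_add_right]; exact Submodule.add_mem _ ihx ihy
  | smul r x hx ih => rw [cross_smul_right]; exact Submodule.smul_mem _ r ih

attribute [local simp] Quaternion.re_mul Quaternion.imI_mul Quaternion.imJ_mul Quaternion.imK_mul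

/-- The anonymous constructor `⟨a, b, c, d⟩ : ℍ[ℝ]` elaborates at the unfolded type
`ℍ[ℝ,-1,0,-1]`, where the `Quaternion` simp lemmas do not fire. -/
def quat (a b c d : ℝ) : ℍ[ℝ] := ⟨a, b, c, d⟩

@[simp] lemma quat_re (a b c d : ℝ) : (quat a b c d).re = a := rfl
@[simp] lemma quat_imI (a b c d : ℝ) : (quat a b c d).imI = b := rfl
@[simp] lemma quat_imJ (a b c d : ℝ) : (quat a b c d).imJ = c := rfl
@[simp] lemma quat_imK (a b c d : ℝ) : (quat a b c d).imK = d := rfl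

lemma mul_inl_inl (x x' : ℍ[ℝ]) : mul (x, 0) (x', 0) = (x * x', 0) := by
  simp [mul]

lemma mul_inl_inr (x y : ℍ[ℝ]) : mul (x, 0) (0, y) = (0, y * x) := by
  simp [mul]

lemma cross_inl_inr (x y : ℍ[ℝ]) : cross (x, 0) (0, y) = (0, y * x) := by
  simp only [cross, mul_inl_inr, conj]
  ext <;> simp <;> ring

lemma cross_inr_inl (y x : ℍ[ℝ]) : cross (0, y) (x, 0) = (0, y * star x) := by
  simp only [cross, mul, conj]
  ext <;> simp <;> ring

lemma polar_inr_inr (w y : ℍ[ℝ]) : polar (0, w) (0, y) = -(w * star y).re := by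
  simp [polar_apply]

lemma inr_mem_Im (y : ℍ[ℝ]) : ((0, y) : SplitOct) ∈ Im := by
  simp [mem_Im_iff, conj]

lemma oi_eq : oi = (quat 0 1 0 0, 0) := rfl
lemma oj_eq : oj = (quat 0 0 1 0, 0) := rfl
lemma ok_eq : ok = (quat 0 0 0 1, 0) := rfl

lemma cross_oi_inl (b c : ℝ) : cross oi (quat 0 0 b c, 0) = (quat 0 0 (-c) b, 0) := by
  simp only [cross, oi_eq, mul_inl_inl, conj]
  ext <;> simp <;> ring

lemma cross_Bplane_Nplane (m n b c : ℝ) :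
    cross (0, quat 0 0 m n) (quat 0 0 b c, 0) = (0, quat (b * m + c * n) (b * n - c * m) 0 0) := by
  rw [cross_inr_inl]
  ext <;> simp <;> ring

lemma mem_Nplane_iff {x : SplitOct} : x ∈ Nplane ↔ ∃ b c : ℝ, x = (quat 0 0 b c, 0) := by
  simp only [Nplane, Submodule.mem_span_pair, oj_eq, ok_eq]
  refine exists₂_congr fun b c => ?_
  rw [eq_comm]
  constructor <;> rintro rfl <;> ext <;> simp

lemma mem_Tplane_iff {x : SplitOct} : x ∈ Tplane ↔ ∃ s s' : ℝ, x = (0, quat s s' 0 0) := by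
  simp only [Tplane, Submodule.mem_span_pair, ol, oli, oi_eq, mul]
  constructor <;> rintro ⟨s, s', rfl⟩ <;> exact ⟨s, -s', by ext <;> simp⟩

lemma mem_Bplane_iff {x : SplitOct} : x ∈ Bplane ↔ ∃ m n : ℝ, x = (0, quat 0 0 m n) := by
  simp only [Bplane, Submodule.mem_span_pair, olj, olk, ol, oj_eq, ok_eq, mul]
  constructor <;> rintro ⟨m, n, rfl⟩ <;> exact ⟨-m, -n, by ext <;> simp⟩

lemma snd_eq_zero_of_mem_Pplane {y : SplitOct} (hy : y ∈ Pplane) : y.2 = 0 := by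
  have : Pplane ≤ LinearMap.ker (LinearMap.snd ℝ ℍ[ℝ] ℍ[ℝ]) := by
    rw [Pplane, Submodule.span_le]
    rintro _ (rfl | rfl | rfl) <;> rfl
  exact this hy

lemma mem_orth_Pplane_iff {z : SplitOct} : z ∈ orth Pplane ↔ z.1 = 0 := by
  constructor
  · rintro ⟨hIm, hperp⟩
    have hre : z.1.re = 0 := by
      have := congrArg (fun x : SplitOct => x.1.re) (mem_Im_iff.1 hIm)
      simp only [conj, Prod.fst_neg, Quaternion.re_star, Quaternion.re_neg] at this
      linarith
    have hi := hperp oi (Submodule.subset_span (by simp))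
    have hj := hperp oj (Submodule.subset_span (by simp))
    have hk := hperp ok (Submodule.subset_span (by simp))
    simp [oi_eq, oj_eq, ok_eq, polar_apply] at hi hj hk
    ext <;> assumption
  · intro h
    refine ⟨?_, fun y hy => ?_⟩
    · simpa [← h] using inr_mem_Im z.2
    · simp [polar_apply, h, snd_eq_zero_of_mem_Pplane hy]

/-- The element of `𝒫₀` with `𝐣 ↦ (0, s + s'i)`; on `N` it is `(ζj, 0) ↦ (0, (s + s'i)ζ)` for
`ζ ∈ span{1, i}`. -/
def pencil (s s' : ℝ) : SplitOct →ₗ[ℝ] SplitOct where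
  toFun x := (0, quat (s * x.1.imJ - s' * x.1.imK) (s' * x.1.imJ + s * x.1.imK) 0 0)
  map_add' x y := by ext <;> simp <;> ring
  map_smul' r x := by ext <;> simp <;> ring

lemma pencil_apply (s s' : ℝ) (x : SplitOct) :
    pencil s s' x = (0, quat (s * x.1.imJ - s' * x.1.imK) (s' * x.1.imJ + s * x.1.imK) 0 0) :=
  rfl

lemma cross_oi_inr (y : ℍ[ℝ]) : cross oi (0, y) = (0, y * quat 0 1 0 0) := cross_inl_inr _ _

lemma pencil_mem_Pzero (s s' : ℝ) : (pencil s s').comp Pplane.subtype ∈ Pzero := by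
  refine ⟨fun x => inr_mem_Im _, ?_, fun n hn => mem_Tplane_iff.2 ⟨_, _, rfl⟩, fun n hn _ => ?_⟩
  · ext <;> simp [pencil_apply, oi_eq]
  · obtain ⟨b, c, rfl⟩ := mem_Nplane_iff.1 hn
    simp only [LinearMap.comp_apply, Submodule.subtype_apply, pencil_apply, cross_oi_inl,
      cross_oi_inr]
    ext <;> simp <;> ring

lemma exists_pencil_of_mem_Pzero {φ : Pplane →ₗ[ℝ] SplitOct} (hφ : φ ∈ Pzero) :
    ∃ s s' : ℝ, ∀ x (hx : x ∈ Pplane), φ ⟨x, hx⟩ = pencil s s' x := by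
  obtain ⟨-, hi, hT, hcomm⟩ := hφ
  have hjN : oj ∈ Nplane := Submodule.subset_span (by simp)
  have hkN : ok ∈ Nplane := Submodule.subset_span (by simp)
  obtain ⟨s, s', hj⟩ := mem_Tplane_iff.1 (hT oj hjN)
  have hk : φ ⟨ok, N_le_P hkN⟩ = (0, quat (-s') s 0 0) := by
    have h := hcomm oj hjN (cross_oi_oj ▸ N_le_P hkN)
    simp only [cross_oi_oj, hj, cross_oi_inr] at h
    rw [h]
    ext <;> simp
  refine ⟨s, s', fun x hx => ?_⟩
  obtain ⟨a, b, c, rfl⟩ := Submodule.mem_span_triple.1 hx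
  have hsum : (⟨a • oi + b • oj + c • ok, hx⟩ : Pplane)
      = a • ⟨oi, oi_mem_P⟩ + b • ⟨oj, N_le_P hjN⟩ + c • ⟨ok, N_le_P hkN⟩ := rfl
  rw [hsum, map_add, map_add, map_smul, map_smul, map_smul, hi, hj, hk]
  ext <;> simp [pencil_apply, oi_eq, oj_eq, ok_eq] <;> ring

lemma mem_Rsub_iff {b c a₁ a₂ : ℝ} (hbc : b ^ 2 + c ^ 2 = 1) (hu : (quat 0 0 b c, 0) ∈ Pplane)
    (hv : a₁ • oi + a₂ • cross oi (quat 0 0 b c, 0) ∈ Pplane) (y : ℍ[ℝ]) :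
    (0, y) ∈ Rsub (quat 0 0 b c, 0) (a₁ • oi + a₂ • cross oi (quat 0 0 b c, 0)) hu hv ↔
      y.re = a₁ * a₂ / (1 + a₂ ^ 2) * (b * y.imJ + c * y.imK) ∧
        y.imI = a₁ * a₂ / (1 + a₂ ^ 2) * (b * y.imK - c * y.imJ) := by
  set A := (1 + a₂ ^ 2) * y.re - a₁ * a₂ * (b * y.imJ + c * y.imK)
  set B := (1 + a₂ ^ 2) * y.imI - a₁ * a₂ * (b * y.imK - c * y.imJ)
  have hv_eq : a₁ • oi + a₂ • cross oi (quat 0 0 b c, 0) = (quat 0 a₁ (-(a₂ * c)) (a₂ * b), 0) := by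
    rw [cross_oi_inl, oi_eq]
    ext <;> simp
  have key : ∀ s s' : ℝ, polar (pencil s s' (quat 0 0 b c, 0)) (0, y) +
      polar (pencil s s' (a₁ • oi + a₂ • cross oi (quat 0 0 b c, 0)))
        (mul (mul (quat 0 0 b c, 0) (a₁ • oi + a₂ • cross oi (quat 0 0 b c, 0))) (0, y)) =
      -(s * (b * A + c * B) + s' * (b * B - c * A)) := by
    intro s s'
    -- `hbc` enters through `uv = a₂𝐢 + a₁(c𝐣 - b𝐤)`.
    rw [hv_eq, mul_inl_inl, mul_inl_inr, pencil_apply, pencil_apply, polar_inr_inr, polar_inr_inr]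
    simp [A, B]
    linear_combination -a₂ ^ 2 * (s * (b * y.re + c * y.imI) + s' * (b * y.imI - c * y.re)) * hbc
  have h₀ : 1 + a₂ ^ 2 ≠ 0 := by positivity
  have hsolve : A = 0 ∧ B = 0 ↔ y.re = a₁ * a₂ / (1 + a₂ ^ 2) * (b * y.imJ + c * y.imK) ∧
      y.imI = a₁ * a₂ / (1 + a₂ ^ 2) * (b * y.imK - c * y.imJ) := by
    simp only [A, B, sub_eq_zero, div_mul_eq_mul_div, eq_div_iff h₀, mul_comm (1 + a₂ ^ 2)]
  rw [← hsolve]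
  constructor
  · rintro ⟨-, h⟩
    have h₁ := key 1 0 ▸ h _ (pencil_mem_Pzero 1 0)
    have h₂ := key 0 1 ▸ h _ (pencil_mem_Pzero 0 1)
    constructor
    · linear_combination -b * h₁ + c * h₂ - A * hbc
    · linear_combination -c * h₁ - b * h₂ - B * hbc
  · rintro ⟨hA, hB⟩
    refine ⟨mem_orth_Pplane_iff.2 rfl, fun φ hφ => ?_⟩
    obtain ⟨s, s', hφ⟩ := exists_pencil_of_mem_Pzero hφ
    rw [hφ, hφ, key, hA, hB]
    ring

theorem R_is_graph_over_B_general
    (u : SplitOct) (huN : u ∈ Nplane) (hqu : q u = 1)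
    (a₁ a₂ : ℝ) :
    ((Rsub u (a₁ • oi + a₂ • cross oi u) (N_le_P huN)
        (Pplane.add_mem (Pplane.smul_mem a₁ oi_mem_P)
          (Pplane.smul_mem a₂ (N_le_P (cross_oi_mem_N huN)))) : Set SplitOct)
      = (fun z => z + (a₁ * a₂ / (1 + a₂ ^ 2)) • cross z u) '' (Bplane : Set SplitOct)) ∧
    ∀ z ∈ Bplane, cross z u ∈ Tplane := by
  obtain ⟨b, c, rfl⟩ := mem_Nplane_iff.mp huN
  have hbc : b ^ 2 + c ^ 2 = 1 := by
    simpa [q_apply, Quaternion.normSq_def', sq] using hqu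
  set κ := a₁ * a₂ / (1 + a₂ ^ 2)
  refine ⟨Set.ext fun z => ⟨fun hz => ?_, ?_⟩, fun w hw => ?_⟩
  · obtain ⟨y, rfl⟩ : ∃ y, z = (0, y) := ⟨z.2, Prod.ext (mem_orth_Pplane_iff.1 hz.1) rfl⟩
    obtain ⟨hre, himI⟩ := (mem_Rsub_iff hbc _ _ y).1 hz
    refine ⟨(0, quat 0 0 y.imJ y.imK), mem_Bplane_iff.2 ⟨_, _, rfl⟩, ?_⟩
    dsimp only
    rw [cross_Bplane_Nplane]
    ext <;> simp [κ, hre, himI]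
  · rintro ⟨w, hw, rfl⟩
    obtain ⟨m, n, rfl⟩ := mem_Bplane_iff.1 hw
    dsimp only
    rw [cross_Bplane_Nplane]
    have hpt : ((0, quat 0 0 m n) + κ • (0, quat (b * m + c * n) (b * n - c * m) 0 0) : SplitOct)
        = (0, quat (κ * (b * m + c * n)) (κ * (b * n - c * m)) m n) := by
      ext <;> simp
    rw [SetLike.mem_coe, hpt, mem_Rsub_iff hbc]
    simp [κ]
  · obtain ⟨m, n, rfl⟩ := mem_Bplane_iff.1 hw
    rw [cross_Bplane_Nplane]
    exact mem_Tplane_iff.2 ⟨_, _, rfl⟩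

/-- For `u ∈ N` of unit norm and `v = a₁𝐢 + a₂(𝐢×u)` with `a₁² + a₂² = 1`,
the subspace `R(u,v)` is the graph over `B` of the map `z ↦ (a₁a₂/(1+a₂²))·(z×u) : B → T`. -/
theorem R_is_graph_over_B
    (u : SplitOct) (huN : u ∈ Nplane) (hqu : q u = 1)
    (a₁ a₂ : ℝ) (ha : a₁ ^ 2 + a₂ ^ 2 = 1) :
    ((Rsub u (a₁ • oi + a₂ • cross oi u) (N_le_P huN)
        (Pplane.add_mem (Pplane.smul_mem a₁ oi_mem_P)
          (Pplane.smul_mem a₂ (N_le_P (cross_oi_mem_N huN)))) : Set SplitOct)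
      = (fun z => z + (a₁ * a₂ / (1 + a₂ ^ 2)) • cross z u) '' (Bplane : Set SplitOct)) ∧
    ∀ z ∈ Bplane, cross z u ∈ Tplane :=
  R_is_graph_over_B_general u huN hqu a₁ a₂

end SplitOct
end
end
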